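/- arXiv:2008.07967 — 3 statements merged into one kernel-verified Lean document; each statement's English description precedes it below -/
import Mathlib

section
/- If Ŝ is a connected subset of vertices of the (r × q) grid graph that separates corner (1,1) from corner (r,1) and also separates corner (1,q) from corner (r,q), then |Ŝ| ≥ q. -/
open SimpleGraph

/-- The `(r × q)` grid graph on vertex set `Fin r × Fin q`:
`(i₁,j₁)` is adjacent to `(i₂,j₂)` iff `|i₁−i₂| + |j₁−j₂| = 1`. -/
def gridGraph (r q : ℕ) : SimpleGraph (Fin r × Fin q) where
  Adj u v := Nat.dist u.1.val v.1.val + Nat.dist u.2.val v.2.val = 1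
  symm := by
    constructor
    intro u v h
    rw [Nat.dist_comm u.1.val, Nat.dist_comm u.2.val] at h
    exact h
  loopless := by
    constructor
    intro u h
    simp [Nat.dist_self] at h

/-- `S` separates `u` from `v` in `G`: every walk from `u` to `v` meets `S`. -/
def Separates {V : Type*} (G : SimpleGraph V) (S : Set V) (u v : V) : Prop :=
  ∀ p : G.Walk u v, ∃ x ∈ p.support, x ∈ S

/-- `ψ` witnesses that `G` is contractible to `H`: `ψ` is onto, every fiber induces a
(nonempty) connected subgraph, and adjacency in `H` corresponds exactly to existence
of an edge of `G` between the fibers. -/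
def IsContractionMap {V W : Type*} (G : SimpleGraph V) (H : SimpleGraph W)
    (ψ : V → W) : Prop :=
  Function.Surjective ψ ∧
  (∀ w : W, (G.induce (ψ ⁻¹' {w})).Connected) ∧
  (∀ w w' : W, H.Adj w w' ↔ ∃ u v : V, ψ u = w ∧ ψ v = w' ∧ G.Adj u v)

/-- The number of edge contractions used by a contraction map: `∑_w (|ψ⁻¹(w)| − 1)`. -/
noncomputable def contractionCost {V W : Type*} [Fintype W] (ψ : V → W) : ℕ :=
  ∑ w : W, ((ψ ⁻¹' {w}).ncard - 1)

/-- Two vertex sets are adjacent if there is an edge with one endpoint in each. -/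
def SetAdj {V : Type*} (G : SimpleGraph V) (X Y : Set V) : Prop :=
  ∃ x ∈ X, ∃ y ∈ Y, G.Adj x y

/-- The (external) neighborhood of a vertex set. -/
def extNbhd {V : Type*} (G : SimpleGraph V) (X : Set V) : Set V :=
  {v | v ∉ X ∧ ∃ x ∈ X, G.Adj x v}

/-- The set of vertices of `G` lying in connected component `c` of `G − S`. -/
def compSupp {V : Type*} (G : SimpleGraph V) (S : Set V)
    (c : (G.induce Sᶜ).ConnectedComponent) : Set V :=
  {v : V | ∃ h : v ∈ Sᶜ, (G.induce Sᶜ).connectedComponentMk ⟨v, h⟩ = c}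

/-! The columns `{(i, 1)}` and `{(i, q)}` are paths between the separated corners, so `Ŝ` meets
column `1` and column `q`. Along a path inside the connected set `Ŝ` joining these two points the
column index changes by at most one per step, so `Ŝ` meets every column. -/

theorem SimpleGraph.Walk.exists_mem_support_eq_of_dist_le_one {V : Type*} {G : SimpleGraph V}
    (f : V → ℕ) (hf : ∀ u v, G.Adj u v → Nat.dist (f u) (f v) ≤ 1) {a b : V}
    (p : G.Walk a b) {j : ℕ} (haj : f a ≤ j) (hjb : j ≤ f b) :
    ∃ x ∈ p.support, f x = j := by
  induction p with
  | nil => exact ⟨_, List.mem_singleton_self _, le_antisymm haj hjb⟩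
  | @cons u v _ huv p ih =>
    by_cases hu : f u = j
    · exact ⟨u, (cons huv p).start_mem_support, hu⟩
    · have hvj : f v ≤ j := by
        have := hf u v huv
        unfold Nat.dist at this
        omega
      obtain ⟨x, hx, rfl⟩ := ih hvj hjb
      exact ⟨x, List.mem_cons_of_mem _ hx, rfl⟩

theorem gridGraph_adj_snd_dist_le_one {r q : ℕ} {u v : Fin r × Fin q}
    (h : (gridGraph r q).Adj u v) : Nat.dist u.2 v.2 ≤ 1 := by
  have h' : Nat.dist u.1 v.1 + Nat.dist u.2 v.2 = 1 := h
  omega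

theorem gridGraph_exists_walk_column {r q : ℕ} (hr : 0 < r) (j : Fin q) (i : ℕ) (hi : i < r) :
    ∃ p : (gridGraph r q).Walk (⟨0, hr⟩, j) (⟨i, hi⟩, j), ∀ v ∈ p.support, v.2 = j := by
  induction i with
  | zero => exact ⟨Walk.nil, by simp⟩
  | succ i ih =>
    obtain ⟨p, hp⟩ := ih (by omega)
    have hadj : (gridGraph r q).Adj (⟨i, by omega⟩, j) (⟨i + 1, hi⟩, j) := by
      simp [gridGraph, Nat.dist]
    refine ⟨p.concat hadj, fun v hv => ?_⟩
    rw [Walk.support_concat, List.mem_append, List.mem_singleton] at hv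
    rcases hv with hv | rfl
    · exact hp v hv
    · rfl

theorem Separates.exists_mem_snd_eq {r q : ℕ} {hr : 0 < r} {S : Set (Fin r × Fin q)} {j : Fin q}
    (hS : Separates (gridGraph r q) S (⟨0, hr⟩, j) (⟨r - 1, by omega⟩, j)) :
    ∃ s ∈ S, s.2 = j := by
  obtain ⟨p, hp⟩ := gridGraph_exists_walk_column hr j (r - 1) (by omega)
  obtain ⟨s, hsp, hsS⟩ := hS p
  exact ⟨s, hsS, hp s hsp⟩

theorem exists_mem_snd_eq_of_preconnected_induce {r q : ℕ} {S : Set (Fin r × Fin q)}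
    (hS : ((gridGraph r q).induce S).Preconnected) {x y : Fin r × Fin q} (hx : x ∈ S)
    (hy : y ∈ S) {j : Fin q} (hxj : x.2 ≤ j) (hjy : j ≤ y.2) : ∃ s ∈ S, s.2 = j := by
  obtain ⟨p⟩ := hS ⟨x, hx⟩ ⟨y, hy⟩
  obtain ⟨s, -, hs⟩ := p.exists_mem_support_eq_of_dist_le_one (fun s : S => (s.1.2 : ℕ))
    (fun _ _ h => gridGraph_adj_snd_dist_le_one h) hxj hjy
  exact ⟨s, s.2, Fin.ext hs⟩

theorem Set.card_le_ncard_of_forall_exists_snd_eq {α β : Type*} [Finite α] [Finite β]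
    {S : Set (α × β)} (hS : ∀ j : β, ∃ s ∈ S, s.2 = j) : Nat.card β ≤ S.ncard := by
  have himg : Prod.snd '' S = Set.univ := Set.eq_univ_of_forall hS
  calc Nat.card β = (Prod.snd '' S).ncard := by rw [himg, Set.ncard_univ]
    _ ≤ S.ncard := Set.ncard_image_le S.toFinite

/-- a connected subset of the `(r × q)` grid separating corner `(1,1)`
from `(r,1)` and corner `(1,q)` from `(r,q)` has at least `q` vertices. -/
theorem grid_corner_separator_card (r q : ℕ) (hr : 0 < r) (hq : 0 < q)
    (S : Set (Fin r × Fin q))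
    (hconn : ((gridGraph r q).induce S).Connected)
    (hsep1 : Separates (gridGraph r q) S (⟨0, hr⟩, ⟨0, hq⟩)
      (⟨r - 1, by omega⟩, ⟨0, hq⟩))
    (hsep2 : Separates (gridGraph r q) S (⟨0, hr⟩, ⟨q - 1, by omega⟩)
      (⟨r - 1, by omega⟩, ⟨q - 1, by omega⟩)) :
    q ≤ S.ncard := by
  obtain ⟨x, hxS, hx⟩ := hsep1.exists_mem_snd_eq
  obtain ⟨y, hyS, hy⟩ := hsep2.exists_mem_snd_eq
  have hcols : ∀ j : Fin q, ∃ s ∈ S, s.2 = j := fun j =>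
    exists_mem_snd_eq_of_preconnected_induce hconn.preconnected hxS hyS
      (hx ▸ Fin.le_def.2 (Nat.zero_le _)) (hy ▸ Fin.le_def.2 (Nat.le_sub_one_of_lt j.2))
  simpa using Set.card_le_ncard_of_forall_exists_snd_eq hcols
end

section
/- If Ŝ is a connected subset of vertices of the (r × q) grid graph of size exactly q that separates corner (1,1) from corner (r,1) and also separates (1,q) from (r,q), then Ŝ equals the set of vertices in some single row, i.e., Ŝ = {(i₀, j) : 1 ≤ j ≤ q} for some i₀. -/
open SimpleGraph

/-
The columns of the grid have a discrete intermediate value property: one step changes the column by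
at most one. Both separation hypotheses force `S` to meet the first and the last column, so by
connectedness `S` meets every column. Having exactly `q` vertices, `S` then meets every column
exactly once, so two adjacent vertices of `S` lie in different columns and hence in the same row.
By connectedness, `S` lies in a single row, which it fills since it meets every column.
-/

namespace SimpleGraph

variable {V : Type*} {G : SimpleGraph V}

theorem Walk.exists_mem_support_eq (f : V → ℕ) (hf : ∀ u v, G.Adj u v → f v ≤ f u + 1)
    {a b : V} (p : G.Walk a b) {c : ℕ} (ha : f a ≤ c) (hb : c ≤ f b) :
    ∃ x ∈ p.support, f x = c := by
  induction p with
  | nil => exact ⟨_, Walk.start_mem_support _, by omega⟩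
  | @cons u w v h p ih =>
    by_cases hu : f u = c
    · exact ⟨u, Walk.start_mem_support _, hu⟩
    · obtain ⟨x, hx, hxc⟩ := ih (by have := hf u w h; omega) hb
      exact ⟨x, Walk.support_cons h p ▸ List.mem_cons_of_mem u hx, hxc⟩

theorem Preconnected.apply_eq_of_forall_adj {W : Type*} (hG : G.Preconnected) (f : V → W)
    (hf : ∀ u v, G.Adj u v → f u = f v) (u v : V) : f u = f v := by
  obtain ⟨p⟩ := hG u v
  induction p with
  | nil => rfl
  | cons h _ ih => exact (hf _ _ h).trans ih

end SimpleGraph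

namespace gridGraph

variable {r q : ℕ}

theorem snd_le_succ_of_adj {u v : Fin r × Fin q} (h : (gridGraph r q).Adj u v) :
    v.2.val ≤ u.2.val + 1 := by
  change Nat.dist _ _ + Nat.dist _ _ = 1 at h
  simp only [Nat.dist] at h
  omega

theorem fst_eq_of_adj_of_snd_ne {u v : Fin r × Fin q} (h : (gridGraph r q).Adj u v)
    (hne : u.2 ≠ v.2) : u.1 = v.1 := by
  change Nat.dist _ _ + Nat.dist _ _ = 1 at h
  simp only [Nat.dist] at h
  rw [Ne, Fin.ext_iff] at hne
  exact Fin.ext (by omega)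

def columnHom (r : ℕ) (c : Fin q) : pathGraph r →g gridGraph r q where
  toFun i := (i, c)
  map_rel' h := by
    rw [pathGraph_adj] at h
    change Nat.dist _ _ + Nat.dist _ _ = 1
    simp only [Nat.dist]
    omega

theorem exists_mem_snd_eq_of_separates {S : Set (Fin r × Fin q)} {i i' : Fin r} {c : Fin q}
    (h : Separates (gridGraph r q) S (i, c) (i', c)) : ∃ x ∈ S, x.2 = c := by
  obtain ⟨p⟩ := pathGraph_preconnected r i i'
  have hcol : ∀ x ∈ (p.map (columnHom r c)).support, x.2 = c := by
    simp only [Walk.support_map, List.mem_map]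
    rintro _ ⟨j, -, rfl⟩
    rfl
  obtain ⟨x, hx, hxS⟩ := h (p.map (columnHom r c))
  exact ⟨x, hxS, hcol x hx⟩

theorem exists_mem_snd_eq_of_preconnected {S : Set (Fin r × Fin q)}
    (hS : ((gridGraph r q).induce S).Preconnected) {x y : Fin r × Fin q} (hx : x ∈ S)
    (hy : y ∈ S) {c : Fin q} (hxc : x.2 ≤ c) (hcy : c ≤ y.2) : ∃ z ∈ S, z.2 = c := by
  obtain ⟨p⟩ := hS ⟨x, hx⟩ ⟨y, hy⟩
  obtain ⟨z, -, hz⟩ := p.exists_mem_support_eq (fun z : S => (z : Fin r × Fin q).2.val)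
    (fun _ _ h => snd_le_succ_of_adj (induce_adj.mp h)) (c := c.val) hxc hcy
  exact ⟨z, z.2, Fin.ext hz⟩

theorem fst_eq_of_injOn_snd {S : Set (Fin r × Fin q)}
    (hS : ((gridGraph r q).induce S).Preconnected) (hinj : S.InjOn Prod.snd)
    {x y : Fin r × Fin q} (hx : x ∈ S) (hy : y ∈ S) : x.1 = y.1 :=
  hS.apply_eq_of_forall_adj (fun z => z.1.1)
    (fun u v h => fst_eq_of_adj_of_snd_ne h fun he => h.ne (Subtype.ext (hinj u.2 v.2 he)))
    ⟨x, hx⟩ ⟨y, hy⟩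

end gridGraph

/-- a connected subset of the `(r × q)` grid of size exactly `q`
separating corner `(1,1)` from `(r,1)` and corner `(1,q)` from `(r,q)` is the
vertex set of a single row. -/
theorem grid_corner_separator_eq_row (r q : ℕ) (hr : 0 < r) (hq : 0 < q)
    (S : Set (Fin r × Fin q))
    (hconn : ((gridGraph r q).induce S).Connected)
    (hcard : S.ncard = q)
    (hsep1 : Separates (gridGraph r q) S (⟨0, hr⟩, ⟨0, hq⟩)
      (⟨r - 1, by omega⟩, ⟨0, hq⟩))
    (hsep2 : Separates (gridGraph r q) S (⟨0, hr⟩, ⟨q - 1, by omega⟩)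
      (⟨r - 1, by omega⟩, ⟨q - 1, by omega⟩)) :
    ∃ i₀ : Fin r, S = {p : Fin r × Fin q | p.1 = i₀} := by
  obtain ⟨x, hxS, hx⟩ := gridGraph.exists_mem_snd_eq_of_separates hsep1
  obtain ⟨y, hyS, hy⟩ := gridGraph.exists_mem_snd_eq_of_separates hsep2
  have himage : Prod.snd '' S = Set.univ := Set.eq_univ_of_forall fun c =>
    gridGraph.exists_mem_snd_eq_of_preconnected hconn.preconnected hxS hyS
      (by rw [hx, Fin.le_iff_val_le_val]; exact Nat.zero_le _)
      (by rw [hy, Fin.le_iff_val_le_val]; exact Nat.le_sub_one_of_lt c.isLt)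
  have hinj : S.InjOn Prod.snd := Set.injOn_of_ncard_image_eq <| by
    rw [himage, Set.ncard_univ, Nat.card_eq_fintype_card, Fintype.card_fin, hcard]
  have hrow {z} (hz : z ∈ S) : z.1 = x.1 :=
    gridGraph.fst_eq_of_injOn_snd hconn.preconnected hinj hz hxS
  refine ⟨x.1, Set.Subset.antisymm (fun z hz => hrow hz) fun z hz => ?_⟩
  obtain ⟨w, hwS, hw⟩ := himage ▸ Set.mem_univ z.2
  have hwz : w = z := Prod.ext ((hrow hwS).trans hz.symm) hw
  exact hwz ▸ hwS
end

section
/- If G contains a (p × t)-grid-separator S with p ≥ 2, and R is any row of G[S] other than the first or last row, then G − R has at least two connected components each containing at least k + 1 vertices. -/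
/-!
Extend the row index of the grid `G[S]` to a height function on all of `G`, equal to `0` on
`C₁` and to `p - 1` on `C₂`. Since `N(C₁)` and `N(C₂)` are the first and last rows, the height
changes by at most one along every edge, so a walk from `C₁` to `C₂` passes through a vertex of
height `i`; outside `S` the only heights are `0` and `p - 1`, so that vertex lies in row `i`.
Hence `C₁` and `C₂`, each of size at least `k + 1`, lie in distinct components of `G - R_i`.
-/

open SimpleGraph

/-- The set of vertices of `G` mapped by the grid isomorphism `e` into row `i`. -/
def rowSet {V : Type*} {G : SimpleGraph V} {S : Set V} {p t : ℕ}
    (e : G.induce S ≃g gridGraph p t) (i : Fin p) : Set V :=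
  {v : V | ∃ h : v ∈ S, (e ⟨v, h⟩).1 = i}

namespace SimpleGraph.Walk

variable {V : Type*} {G : SimpleGraph V}

theorem exists_mem_support_eq_of_le_succ (f : V → ℕ) (hf : ∀ u v, G.Adj u v → f v ≤ f u + 1)
    {u v : V} (w : G.Walk u v) {n : ℕ} (hu : f u ≤ n) (hv : n ≤ f v) :
    ∃ x ∈ w.support, f x = n := by
  rcases hu.eq_or_lt with hun | hun
  · exact ⟨u, w.start_mem_support, hun⟩
  obtain ⟨d, hd, hfst, hsnd⟩ :=
    w.exists_boundary_dart {x | f x < n} hun (by simpa using hv)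
  have hstep := hf _ _ d.adj
  change f d.fst < n at hfst
  change ¬f d.snd < n at hsnd
  exact ⟨d.snd, w.dart_snd_mem_support_of_mem_darts hd, by omega⟩

end SimpleGraph.Walk

theorem gridGraph.dist_fst_le_one_of_adj {p t : ℕ} {x y : Fin p × Fin t}
    (h : (gridGraph p t).Adj x y) : Nat.dist x.1 y.1 ≤ 1 := by
  have : Nat.dist x.1 y.1 + Nat.dist x.2 y.2 = 1 := h
  omega

section ComponentSupport

variable {V : Type*} {G : SimpleGraph V} {S : Set V}

theorem compSupp_subset_compl (c : (G.induce Sᶜ).ConnectedComponent) :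
    compSupp G S c ⊆ Sᶜ :=
  fun _ hv => hv.1

theorem disjoint_compSupp {c c' : (G.induce Sᶜ).ConnectedComponent} (h : c ≠ c') :
    Disjoint (compSupp G S c) (compSupp G S c') :=
  Set.disjoint_left.mpr fun _ ⟨_, hc⟩ ⟨_, hc'⟩ => h (hc.symm.trans hc')

theorem compSupp_subset_compSupp_map {R : Set V} (hRS : R ⊆ S)
    (c : (G.induce Sᶜ).ConnectedComponent) :
    compSupp G S c ⊆
      compSupp G R (c.map (G.induceHomOfLE (Set.compl_subset_compl.mpr hRS)).toHom) := by
  rintro v ⟨hv, rfl⟩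
  exact ⟨Set.compl_subset_compl.mpr hRS hv, rfl⟩

theorem ne_of_separates {R : Set V} {a b : V} (hsep : Separates G R a b)
    {d d' : (G.induce Rᶜ).ConnectedComponent} (ha : a ∈ compSupp G R d)
    (hb : b ∈ compSupp G R d') : d ≠ d' := by
  obtain ⟨haR, rfl⟩ := ha
  obtain ⟨hbR, rfl⟩ := hb
  intro hab
  obtain ⟨w⟩ := ConnectedComponent.exact hab
  obtain ⟨x, hx, hxR⟩ := hsep (w.map (Embedding.induce Rᶜ).toHom : G.Walk a b)
  obtain ⟨y, -, rfl⟩ := List.mem_map.mp (w.support_map _ ▸ hx)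
  exact y.2 hxR

end ComponentSupport

section GridHeight

variable {V : Type*} {G : SimpleGraph V} {S : Set V} {p t : ℕ} (e : G.induce S ≃g gridGraph p t)

theorem rowSet_subset (i : Fin p) : rowSet e i ⊆ S :=
  fun _ hv => hv.1

noncomputable def gridHeight (A : Set V) (v : V) : ℕ :=
  open Classical in if h : v ∈ S then (e ⟨v, h⟩).1 else if v ∈ A then 0 else p - 1

variable {A B : Set V}

theorem gridHeight_of_mem {v : V} (h : v ∈ S) : gridHeight e A v = (e ⟨v, h⟩).1 :=
  dif_pos h

theorem gridHeight_of_mem_rowSet {v : V} {i : Fin p} (h : v ∈ rowSet e i) :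
    gridHeight e A v = i := by
  obtain ⟨hS, hi⟩ := h
  rw [gridHeight_of_mem e hS, hi]

theorem gridHeight_of_notMem_of_mem {v : V} (hS : v ∉ S) (hA : v ∈ A) :
    gridHeight e A v = 0 := by
  simp [gridHeight, hS, hA]

theorem gridHeight_of_notMem_of_notMem {v : V} (hS : v ∉ S) (hA : v ∉ A) :
    gridHeight e A v = p - 1 := by
  simp [gridHeight, hS, hA]

theorem gridHeight_le_sub_one (v : V) : gridHeight e A v ≤ p - 1 := by
  unfold gridHeight
  split_ifs <;> omega

theorem gridHeight_le_succ_of_adj (hp : 0 < p) (hA : A ⊆ Sᶜ) (hB : B ⊆ Sᶜ)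
    (hcover : ∀ v ∉ S, v ∈ A ∨ v ∈ B) (hNA : extNbhd G A ⊆ rowSet e ⟨0, hp⟩)
    (hNB : extNbhd G B ⊆ rowSet e ⟨p - 1, Nat.sub_one_lt_of_lt hp⟩) {u v : V}
    (huv : G.Adj u v) : gridHeight e A v ≤ gridHeight e A u + 1 := by
  by_cases hu : u ∈ S <;> by_cases hv : v ∈ S
  · have hrow := gridGraph.dist_fst_le_one_of_adj
      (e.map_adj_iff.mpr (show (G.induce S).Adj ⟨u, hu⟩ ⟨v, hv⟩ from huv))
    rw [gridHeight_of_mem e hu, gridHeight_of_mem e hv]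
    unfold Nat.dist at hrow
    omega
  · by_cases hvA : v ∈ A
    · rw [gridHeight_of_notMem_of_mem e hv hvA]
      omega
    · have hvB := (hcover v hv).resolve_left hvA
      rw [gridHeight_of_notMem_of_notMem e hv hvA,
        gridHeight_of_mem_rowSet e (hNB ⟨fun h => hB h hu, v, hvB, huv.symm⟩)]
      exact Nat.le_succ _
  · by_cases huA : u ∈ A
    · rw [gridHeight_of_mem_rowSet e (hNA ⟨fun h => hA h hv, u, huA, huv⟩)]
      exact Nat.zero_le _
    · rw [gridHeight_of_notMem_of_notMem e hu huA]
      exact (gridHeight_le_sub_one e v).trans (Nat.le_succ _)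
  · by_cases hvA : v ∈ A
    · rw [gridHeight_of_notMem_of_mem e hv hvA]
      omega
    · by_cases huA : u ∈ A
      · exact absurd (hNA ⟨hvA, u, huA, huv⟩).1 hv
      · rw [gridHeight_of_notMem_of_notMem e hv hvA, gridHeight_of_notMem_of_notMem e hu huA]
        omega

theorem separates_rowSet (hp : 0 < p) (hA : A ⊆ Sᶜ) (hB : B ⊆ Sᶜ)
    (hcover : ∀ v ∉ S, v ∈ A ∨ v ∈ B) (hNA : extNbhd G A ⊆ rowSet e ⟨0, hp⟩)
    (hNB : extNbhd G B ⊆ rowSet e ⟨p - 1, Nat.sub_one_lt_of_lt hp⟩) (hAB : Disjoint A B)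
    {i : Fin p} (hi0 : 0 < (i : ℕ)) (hip : (i : ℕ) + 2 ≤ p) {a b : V} (ha : a ∈ A)
    (hb : b ∈ B) : Separates G (rowSet e i) a b := by
  intro w
  have ha0 := gridHeight_of_notMem_of_mem e (hA ha) ha
  have hb1 := gridHeight_of_notMem_of_notMem e (hB hb) (Set.disjoint_right.mp hAB hb)
  obtain ⟨x, hx, hxi⟩ := w.exists_mem_support_eq_of_le_succ (gridHeight e A)
    (fun _ _ => gridHeight_le_succ_of_adj e hp hA hB hcover hNA hNB) (n := i)
    (by omega) (by omega)
  refine ⟨x, hx, ?_⟩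
  by_cases hxS : x ∈ S
  · exact ⟨hxS, Fin.ext ((gridHeight_of_mem e hxS).symm.trans hxi)⟩
  · by_cases hxA : x ∈ A
    · rw [gridHeight_of_notMem_of_mem e hxS hxA] at hxi
      omega
    · rw [gridHeight_of_notMem_of_notMem e hxS hxA] at hxi
      omega

end GridHeight

/-- if `S` is a `(p × t)`-grid-separator of `G` (with `p ≥ 2`) and
`R` is an internal row of `G[S]`, then `G − R` has at least two connected
components each containing at least `k + 1` vertices. -/
theorem internal_row_separator {V : Type*} (G : SimpleGraph V) (k p t : ℕ)
    (hp : 2 ≤ p) (S : Set V) (e : G.induce S ≃g gridGraph p t)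
    (c₁ c₂ : (G.induce Sᶜ).ConnectedComponent) (hne : c₁ ≠ c₂)
    (hall : ∀ c : (G.induce Sᶜ).ConnectedComponent, c = c₁ ∨ c = c₂)
    (hc₁ : k + 1 ≤ (compSupp G S c₁).ncard)
    (hc₂ : k + 1 ≤ (compSupp G S c₂).ncard)
    (hN1 : extNbhd G (compSupp G S c₁) = rowSet e ⟨0, by omega⟩)
    (hN2 : extNbhd G (compSupp G S c₂) = rowSet e ⟨p - 1, by omega⟩)
    (i : Fin p) (hi0 : 0 < (i : ℕ)) (hip : (i : ℕ) + 2 ≤ p) :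
    ∃ d₁ d₂ : (G.induce (rowSet e i)ᶜ).ConnectedComponent, d₁ ≠ d₂ ∧
      k + 1 ≤ (compSupp G (rowSet e i) d₁).ncard ∧
      k + 1 ≤ (compSupp G (rowSet e i) d₂).ncard := by
  set A := compSupp G S c₁
  set B := compSupp G S c₂
  have hA : A.ncard ≠ 0 := by omega
  have hB : B.ncard ≠ 0 := by omega
  have hcover : ∀ v ∉ S, v ∈ A ∨ v ∈ B := fun v hv => (hall _).imp (⟨hv, ·⟩) (⟨hv, ·⟩)
  -- `Set.ncard` vanishes on infinite sets, so comparing sizes needs `V` finite.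
  have : Finite V := by
    have hS : S.Finite := Set.finite_coe_iff.mp (Finite.of_equiv _ e.toEquiv.symm)
    refine Set.finite_univ_iff.mp <|
      ((hS.union (Set.finite_of_ncard_ne_zero hA)).union (Set.finite_of_ncard_ne_zero hB)).subset
        fun v _ => ?_
    by_cases hv : v ∈ S
    · exact .inl (.inl hv)
    · exact (hcover v hv).elim (.inl ∘ .inr) .inr
  obtain ⟨a, ha⟩ := Set.nonempty_of_ncard_ne_zero hA
  obtain ⟨b, hb⟩ := Set.nonempty_of_ncard_ne_zero hB
  have hsep := separates_rowSet e (by omega) (compSupp_subset_compl c₁)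
    (compSupp_subset_compl c₂) hcover hN1.le hN2.le (disjoint_compSupp hne) hi0 hip ha hb
  have hsub := compSupp_subset_compSupp_map (G := G) (rowSet_subset e i)
  exact ⟨_, _, ne_of_separates hsep (hsub c₁ ha) (hsub c₂ hb),
    hc₁.trans (Set.ncard_le_ncard (hsub c₁)), hc₂.trans (Set.ncard_le_ncard (hsub c₂))⟩
end
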